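/- Let φ be a nontrivial exponential map on an integral domain A over a field k, let x ∈ A have minimal positive φ-degree n, and set c = D^n(x) (the coefficient of U^n in φ(x)). Then, inside the fraction field of A, A is contained in the subring A^φ[c^{−1}][x] generated by A^φ, the inverse of c, and x. -/

import Mathlib

/-!
If `φ a` has degree `m` and `(m.choose j : A) ≠ 0`, then `D^(m-j) a` has degree exactly `j`,
by `D^j D^i = (i+j).choose j • D^(i+j)`. By Lucas' theorem `m.choose (q ^ v_q(m))` is nonzero
in `A`, `q` the exponential characteristic, so the minimal degree `n` is a power of `q` dividing
every degree. If `φ a` has degree `q n` and leading coefficient `b ∈ A^φ`, then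
`c ^ q * a - b * x ^ q` has smaller degree, and
`a = c ^ (-q) * ((c ^ q * a - b * x ^ q) + b * x ^ q)` closes an induction on the degree.
-/

open Polynomial

/-- An exponential map on a `k`-algebra `A`: a `k`-algebra homomorphism `φ : A → A[U]`
such that evaluating at `U = 0` is the identity and `φ_S φ_U = φ_{S+U}`. -/
def IsExpMap {k A : Type*} [CommSemiring k] [CommSemiring A] [Algebra k A]
    (φ : A →ₐ[k] A[X]) : Prop :=
  (∀ a : A, (φ a).eval 0 = a) ∧
  (∀ a : A,
    eval₂ ((mapRingHom (C : A →+* A[X])).comp (φ : A →+* A[X])) (C X) (φ a)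
      = eval₂ ((C : A[X] →+* A[X][X]).comp (C : A →+* A[X])) (X + C X) (φ a))

/-- The ring of `φ`-invariants `A^φ = {a : A | φ a = a}`. -/
noncomputable def expInv {k A : Type*} [CommSemiring k] [CommSemiring A] [Algebra k A]
    (φ : A →ₐ[k] A[X]) : Subalgebra k A :=
  AlgHom.equalizer φ (IsScalarTower.toAlgHom k A A[X])

/-- The AK invariant: the intersection of the rings of invariants of all exponential maps. -/
noncomputable def AK (k A : Type*) [CommSemiring k] [CommSemiring A] [Algebra k A] : Subalgebra k A :=
  ⨅ φ ∈ {ψ : A →ₐ[k] A[X] | IsExpMap ψ}, expInv φ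

namespace Polynomial

variable {A : Type*} [CommSemiring A]

theorem hasseDeriv_map {B : Type*} [CommSemiring B] (f : A →+* B) (p : A[X]) (j : ℕ) :
    hasseDeriv j (p.map f) = (hasseDeriv j p).map f := by
  ext1 l
  rw [hasseDeriv_coeff, coeff_map, coeff_map, hasseDeriv_coeff, map_mul, map_natCast]

theorem coeff_coeff_eval₂_X_add_C_X (p : A[X]) (i j : ℕ) :
    ((eval₂ ((C : A[X] →+* A[X][X]).comp C) (X + C X) p).coeff j).coeff i
      = (i + j).choose j * p.coeff (i + j) := by
  rw [← eval₂_map, ← comp, ← taylor_apply, taylor_coeff, hasseDeriv_map, eval_map,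
    eval₂_C_X, hasseDeriv_coeff]

theorem coeff_coeff_eval₂_mapRingHom_C_comp_C_X (f : A →+* A[X]) (p : A[X]) (i j : ℕ) :
    ((eval₂ ((mapRingHom (C : A →+* A[X])).comp f) (C X) p).coeff j).coeff i
      = (f (p.coeff i)).coeff j := by
  induction p using Polynomial.induction_on' with
  | add p q hp hq => simp only [eval₂_add, coeff_add, hp, hq, map_add]
  | monomial l r =>
    rw [eval₂_monomial, ← C_pow, coeff_mul_C, RingHom.comp_apply, coe_mapRingHom, coeff_map,
      coeff_C_mul_X_pow, coeff_monomial]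
    obtain rfl | h := eq_or_ne l i <;> simp [*, Ne.symm]

theorem natDegree_C_leadingCoeff_mul_sub_lt {R : Type*} [CommRing R] {p r : R[X]}
    (hp : 0 < p.natDegree) (hpr : p.natDegree = r.natDegree) :
    (C r.leadingCoeff * p - C p.leadingCoeff * r).natDegree < p.natDegree := by
  suffices h : (C r.leadingCoeff * p - C p.leadingCoeff * r).natDegree ≤ p.natDegree - 1 by
    omega
  refine natDegree_le_iff_coeff_eq_zero.2 fun i hi => ?_
  rw [coeff_sub, coeff_C_mul, coeff_C_mul]
  obtain hi | hi := (show p.natDegree ≤ i by omega).eq_or_lt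
  · rw [← hi, hpr, leadingCoeff, leadingCoeff, hpr, mul_comm, sub_self]
  · rw [coeff_eq_zero_of_natDegree_lt hi, coeff_eq_zero_of_natDegree_lt (hpr ▸ hi), mul_zero,
      mul_zero, sub_zero]

end Polynomial

theorem ExpChar.cast_choose_ordProj_ne_zero {R : Type*} [Semiring R] (q : ℕ)
    [hq : ExpChar R q] {m : ℕ} (hm : m ≠ 0) :
    ((m.choose (q ^ m.factorization q) : ℕ) : R) ≠ 0 := by
  cases hq with
  | zero => simpa [Nat.factorization_one_right] using hm
  | prime hp =>
    have := Fact.mk hp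
    rw [Ne, CharP.cast_eq_zero_iff R q, ← Nat.modEq_zero_iff_dvd]
    intro h
    have hlucas := Choose.choose_pow_mul_pow_mul_modEq_choose_nat (p := q)
      (k := m.factorization q) (a := m / q ^ m.factorization q) (b := 1)
    rw [mul_one, Nat.ordProj_mul_ordCompl_eq_self, Nat.choose_one_right] at hlucas
    exact Nat.not_dvd_ordCompl hp hm (Nat.modEq_zero_iff_dvd.1 (hlucas.symm.trans h))

theorem mem_expInv_iff {k A : Type*} [CommSemiring k] [CommSemiring A] [Algebra k A]
    {φ : A →ₐ[k] A[X]} {a : A} : a ∈ expInv φ ↔ φ a = C a :=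
  AlgHom.mem_equalizer _ _ _

namespace IsExpMap

section CommSemiring

variable {k A : Type*} [CommSemiring k] [CommSemiring A] [Algebra k A] {φ : A →ₐ[k] A[X]}

theorem coeff_zero (hφ : IsExpMap φ) (a : A) : (φ a).coeff 0 = a := by
  rw [coeff_zero_eq_eval_zero, hφ.1]

-- The coefficient of `S ^ j * U ^ i` in `φ_S φ_U a = φ_{S+U} a`, `S` being the outer variable.
theorem coeff_coeff (hφ : IsExpMap φ) (a : A) (i j : ℕ) :
    (φ ((φ a).coeff i)).coeff j = (i + j).choose j * (φ a).coeff (i + j) := by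
  have h := congrArg (fun q : A[X][X] => (q.coeff j).coeff i) (hφ.2 a)
  simpa only [coeff_coeff_eval₂_mapRingHom_C_comp_C_X, coeff_coeff_eval₂_X_add_C_X,
    AlgHom.coe_toRingHom] using h

theorem natDegree_coeff_le (hφ : IsExpMap φ) (a : A) (i : ℕ) :
    (φ ((φ a).coeff i)).natDegree ≤ (φ a).natDegree - i := by
  refine natDegree_le_iff_coeff_eq_zero.2 fun j hj => ?_
  rw [hφ.coeff_coeff, coeff_eq_zero_of_natDegree_lt (by omega), mul_zero]

theorem leadingCoeff_mem_expInv (hφ : IsExpMap φ) (a : A) :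
    (φ a).leadingCoeff ∈ expInv φ := by
  refine mem_expInv_iff.2 (ext fun j => ?_)
  rcases Nat.eq_zero_or_pos j with rfl | hj
  · rw [hφ.coeff_zero, coeff_C_zero]
  · rw [leadingCoeff, hφ.coeff_coeff, coeff_eq_zero_of_natDegree_lt (by omega), mul_zero,
      coeff_C_of_ne_zero hj.ne']

theorem mem_expInv_of_natDegree_eq_zero (hφ : IsExpMap φ) {a : A} (ha : (φ a).natDegree = 0) :
    a ∈ expInv φ := by
  simpa only [leadingCoeff, ha, hφ.coeff_zero] using hφ.leadingCoeff_mem_expInv a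

theorem exists_natDegree_eq [NoZeroDivisors A] (hφ : IsExpMap φ) {a : A} {j : ℕ}
    (hj : j ≤ (φ a).natDegree) (hchoose : (((φ a).natDegree.choose j : ℕ) : A) ≠ 0) :
    ∃ b : A, (φ b).natDegree = j := by
  set m := (φ a).natDegree
  obtain hφa | hφa := eq_or_ne (φ a) 0
  · exact ⟨a, by simp_all [m]⟩
  refine ⟨(φ a).coeff (m - j),
    ((hφ.natDegree_coeff_le a _).trans (by omega)).antisymm (le_natDegree_of_ne_zero ?_)⟩
  rw [hφ.coeff_coeff, Nat.sub_add_cancel hj]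
  exact mul_ne_zero hchoose (leadingCoeff_ne_zero.2 hφa)

theorem exists_natDegree_eq_ordProj [NoZeroDivisors A] (hφ : IsExpMap φ) (q : ℕ) [ExpChar A q]
    {a : A} (ha : (φ a).natDegree ≠ 0) :
    ∃ b : A, (φ b).natDegree = q ^ (φ a).natDegree.factorization q :=
  hφ.exists_natDegree_eq (Nat.ordProj_le q ha) (ExpChar.cast_choose_ordProj_ne_zero q ha)

end CommSemiring

section Domain

variable {k A : Type*} [CommSemiring k] [CommRing A] [IsDomain A] [Algebra k A]
  {φ : A →ₐ[k] A[X]}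

theorem natDegree_dvd_of_minimal (hφ : IsExpMap φ) {x : A} (hx : 0 < (φ x).natDegree)
    (hmin : ∀ a : A, 0 < (φ a).natDegree → (φ x).natDegree ≤ (φ a).natDegree) (a : A) :
    (φ x).natDegree ∣ (φ a).natDegree := by
  obtain ⟨q, _⟩ := ExpChar.exists A
  have hle : ∀ a : A, (φ a).natDegree ≠ 0 →
      (φ x).natDegree ≤ q ^ (φ a).natDegree.factorization q := fun a ha => by
    obtain ⟨b, hb⟩ := hφ.exists_natDegree_eq_ordProj q ha
    exact hb ▸ hmin b (hb ▸ pow_pos (expChar_pos A q) _)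
  have hx_pow : (φ x).natDegree = q ^ (φ x).natDegree.factorization q :=
    (hle x hx.ne').antisymm (Nat.ordProj_le q hx.ne')
  obtain ha | ha := eq_or_ne (φ a).natDegree 0
  · simp [ha]
  refine dvd_trans ?_ (Nat.ordProj_dvd _ q)
  rw [hx_pow, Nat.pow_dvd_pow_iff_pow_le_pow (expChar_pos A q), ← hx_pow]
  exact hle a ha

theorem map_mem_of_minimal {K : Type*} [DivisionRing K] (hφ : IsExpMap φ) {ι : A →+* K}
    (hι : Function.Injective ι) {x : A} (hx : 0 < (φ x).natDegree)
    (hmin : ∀ a : A, 0 < (φ a).natDegree → (φ x).natDegree ≤ (φ a).natDegree)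
    {R : Subring K} (hinv : ∀ b ∈ expInv φ, ι b ∈ R) (hxR : ι x ∈ R)
    (hcR : (ι (φ x).leadingCoeff)⁻¹ ∈ R) (a : A) : ι a ∈ R := by
  set c := (φ x).leadingCoeff
  have hc := hφ.leadingCoeff_mem_expInv x
  have hc0 : ι c ≠ 0 :=
    (map_ne_zero_iff ι hι).2 (leadingCoeff_ne_zero.2 (ne_zero_of_natDegree_gt hx))
  induction h : (φ a).natDegree using Nat.strong_induction_on generalizing a with
  | _ m ih =>
  obtain rfl | hm := Nat.eq_zero_or_pos m
  · exact hinv a (hφ.mem_expInv_of_natDegree_eq_zero h)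
  obtain ⟨q, hq⟩ := h ▸ hφ.natDegree_dvd_of_minimal hx hmin a
  set b := (φ a).leadingCoeff
  have hb := hφ.leadingCoeff_mem_expInv a
  have hlower : (φ (c ^ q * a - b * x ^ q)).natDegree < m := by
    have hφ_eq : φ (c ^ q * a - b * x ^ q)
        = C (φ x ^ q).leadingCoeff * φ a - C (φ a).leadingCoeff * φ x ^ q := by
      simp only [map_sub, map_mul, map_pow, mem_expInv_iff.1 hc, mem_expInv_iff.1 hb,
        leadingCoeff_pow, c, b]
    rw [hφ_eq, ← h]
    exact natDegree_C_leadingCoeff_mul_sub_lt (h ▸ hm)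
      (by rw [natDegree_pow, h, hq, mul_comm])
  have hιa : ι a = (ι c)⁻¹ ^ q * (ι (c ^ q * a - b * x ^ q) + ι b * ι x ^ q) := by
    simp only [map_sub, map_mul, map_pow, sub_add_cancel, inv_pow]
    rw [inv_mul_cancel_left₀ (pow_ne_zero q hc0)]
  rw [hιa]
  exact R.mul_mem (R.pow_mem hcR q)
    (R.add_mem (ih _ hlower _ rfl) (R.mul_mem (hinv b hb) (R.pow_mem hxR q)))

end Domain

end IsExpMap

theorem statement8_general {k A : Type*} [Field k] [CommRing A] [IsDomain A] [Algebra k A]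
    (φ : A →ₐ[k] A[X]) (hφ : IsExpMap φ)
    (x : A) (n : ℕ) (hn : 0 < n) (hxn : (φ x).natDegree = n)
    (hmin : ∀ a : A, 0 < (φ a).natDegree → n ≤ (φ a).natDegree)
    (c : A) (hc : c = (φ x).coeff n) :
    ∀ a : A, algebraMap A (FractionRing A) a ∈
      Subring.closure
        (insert ((algebraMap A (FractionRing A) c)⁻¹)
          (insert (algebraMap A (FractionRing A) x)
            (algebraMap A (FractionRing A) '' (expInv φ : Set A)))) := by
  subst hc hxn
  refine hφ.map_mem_of_minimal (IsFractionRing.injective A (FractionRing A)) hn hmin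
    (fun b hb => Subring.subset_closure ?_) (Subring.subset_closure ?_)
    (Subring.subset_closure (Set.mem_insert _ _))
  · exact Set.mem_insert_of_mem _ (Set.mem_insert_of_mem _ ⟨b, hb, rfl⟩)
  · exact Set.mem_insert_of_mem _ (Set.mem_insert _ _)

/-- Let `φ` be a nontrivial exponential map on a domain `A`, `x` of minimal
positive `φ`-degree `n`, and `c = D^n(x)`. Then, inside `Frac(A)`, `A` is contained in
the subring `A^φ[c⁻¹][x]` generated by `A^φ`, `c⁻¹` and `x`. -/
theorem statement8 {k A : Type*} [Field k] [CommRing A] [IsDomain A] [Algebra k A]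
    (φ : A →ₐ[k] A[X]) (hφ : IsExpMap φ)
    (hnt : φ ≠ IsScalarTower.toAlgHom k A A[X])
    (x : A) (n : ℕ) (hn : 0 < n) (hxn : (φ x).natDegree = n)
    (hmin : ∀ a : A, 0 < (φ a).natDegree → n ≤ (φ a).natDegree)
    (c : A) (hc : c = (φ x).coeff n) :
    ∀ a : A, algebraMap A (FractionRing A) a ∈
      Subring.closure
        (insert ((algebraMap A (FractionRing A) c)⁻¹)
          (insert (algebraMap A (FractionRing A) x)
            (algebraMap A (FractionRing A) '' (expInv φ : Set A)))) :=
  statement8_general φ hφ x n hn hxn hmin c hc
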